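/- Let P = ⟨p₁, …, p_n⟩ and Q = ⟨q₁, …, q_n⟩ be sequences of n points in ℝ², let g > 0 with GED(P, Q) ≤ g, and set Δ = g/√n. For a shift b ∈ [0, Δ]², define X_b as the minimum of |Γ(M)| = 2(n − |M|) over all monotone matchings M between P and Q such that id_{Δ,b}(p_i) = id_{Δ,b}(q_j) for every (i, j) ∈ M. If b is chosen uniformly at random from [0, Δ]², then P[X_b ≥ 12√n + 2g] ≤ 1/2. -/

import Mathlib

/-!
Fix a matching `M` with `δ(M) = GED(P, Q) ≤ g`. Dropping from `M` the pairs that the grid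
separates leaves a matching admissible for `X_b`, so
`X_b ≤ |Γ(M)| + 2·#separated ≤ g + 2·#separated`.
In each coordinate the two points of a pair at distance `d` fall into different grid columns for a
set of shifts of measure at most `d`, so the pair is separated with probability at most `2d/Δ`.
Hence the expected number of separated pairs is at most `2g/Δ = 2√n`, and by Markov's inequality
it reaches `6√n` with probability at most `1/3`.
-/

open MeasureTheory

noncomputable section

/-- Points in the plane with the Euclidean distance. -/
abbrev Pt := EuclideanSpace ℝ (Fin 2)

/-- The cell of the grid with side length `Δ`, shifted by `b`, containing the point `p`. -/
def gridId (Δ : ℝ) (b : Fin 2 → ℝ) (p : Pt) : ℤ × ℤ :=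
  (⌊(p 0 + b 0) / Δ⌋, ⌊(p 1 + b 1) / Δ⌋)

/-- The box `[0, Δ]²` of possible shifts. -/
def shiftBox (Δ : ℝ) : Set (Fin 2 → ℝ) := Set.Icc 0 (fun _ => Δ)

/-- The uniform (normalized Lebesgue) measure on the box `[0, Δ]²`. -/
def unifShift (Δ : ℝ) : Measure (Fin 2 → ℝ) :=
  (volume (shiftBox Δ))⁻¹ • volume.restrict (shiftBox Δ)

/-- A monotone matching between index sets `Fin n` and `Fin m`: a set of index pairs with
distinct first indices, distinct second indices, such that first indices and second indices
are ordered consistently. -/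
structure MMatch (n m : ℕ) where
  pairs : Finset (Fin n × Fin m)
  inj1 : ∀ p ∈ pairs, ∀ q ∈ pairs, p.1 = q.1 → p = q
  inj2 : ∀ p ∈ pairs, ∀ q ∈ pairs, p.2 = q.2 → p = q
  mono : ∀ p ∈ pairs, ∀ q ∈ pairs, (p.1 < q.1 ↔ p.2 < q.2)

/-- The number of gap points `|Γ(M)|`: indices of both sequences left unmatched by `M`. -/
def gapCount {n m : ℕ} (M : MMatch n m) : ℕ :=
  (n - M.pairs.card) + (m - M.pairs.card)
/-- The cost `δ(M)` (gap penalty 1) of a matching between the first `n` points of `P` and the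
first `m` points of `Q`. -/
def cost (n m : ℕ) (P Q : ℕ → Pt) (M : MMatch n m) : ℝ :=
  (∑ p ∈ M.pairs, dist (P p.1) (Q p.2)) + (gapCount M : ℝ)

/-- The geometric edit distance between `⟨P 0, …, P (n-1)⟩` and `⟨Q 0, …, Q (m-1)⟩`:
the minimum cost over all monotone matchings. -/
def GED (n m : ℕ) (P Q : ℕ → Pt) : ℝ :=
  sInf {c | ∃ M : MMatch n m, c = cost n m P Q M}

/-- `X b`: the minimum number of gap points `|Γ(M)| = 2(n − |M|)` over all monotone matchings
`M` between `P` and `Q` that only match points lying in a common cell of the grid with side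
length `Δ` shifted by `b`. -/
def Xmin (n : ℕ) (Δ : ℝ) (P Q : ℕ → Pt) (b : Fin 2 → ℝ) : ℕ :=
  sInf {k | ∃ M : MMatch n n,
    (∀ p ∈ M.pairs, gridId Δ b (P p.1) = gridId Δ b (Q p.2)) ∧ k = gapCount M}

open scoped ENNReal

lemma volume_floor_div_ne_le_of_le {Δ x y : ℝ} (hΔ : 0 < Δ) (hxy : x ≤ y) :
    volume {u ∈ Set.Icc 0 Δ | ⌊(x + u) / Δ⌋ ≠ ⌊(y + u) / Δ⌋} ≤ ENNReal.ofReal (y - x) := by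
  rcases le_or_gt Δ (y - x) with hd | hd
  · calc _ ≤ volume (Set.Icc 0 Δ) := measure_mono (Set.sep_subset _ _)
      _ ≤ ENNReal.ofReal (y - x) := by simpa [Real.volume_Icc] using ENNReal.ofReal_le_ofReal hd
  set m := ⌊x / Δ⌋
  have hm : (m : ℝ) * Δ ≤ x := (le_div_iff₀ hΔ).1 (Int.floor_le _)
  have hm' : x < (m + 1) * Δ := (div_lt_iff₀ hΔ).1 (Int.lt_floor_add_one _)
  -- `c` is the first grid point right of `x`; as `y < x + Δ`, the floors of `(x + u) / Δ` and
  -- `(y + u) / Δ` differ only when `c` or `c + Δ` lies in `(x + u, y + u]`.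
  set c : ℝ := (m + 1) * Δ
  have hsub : {u ∈ Set.Icc 0 Δ | ⌊(x + u) / Δ⌋ ≠ ⌊(y + u) / Δ⌋} ⊆
      Set.Icc (max (c - y) 0) (c - x) ∪ Set.Icc (c + Δ - y) Δ := by
    rintro u ⟨⟨hu0, huΔ⟩, hne⟩
    set k := ⌊(y + u) / Δ⌋
    have hlt : ⌊(x + u) / Δ⌋ < k :=
      (Int.floor_le_floor (by gcongr)).lt_of_ne hne
    have hky : (k : ℝ) * Δ ≤ y + u := (le_div_iff₀ hΔ).1 (Int.floor_le _)
    have hxk : x + u < k * Δ := (div_lt_iff₀ hΔ).1 (Int.floor_lt.1 hlt)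
    have hmk : m < k := by
      have : (m : ℝ) * Δ < k * Δ := by linarith
      exact_mod_cast lt_of_mul_lt_mul_right this hΔ.le
    have hkm : k < m + 3 := by
      have : (k : ℝ) * Δ < (m + 3) * Δ := by linarith
      exact_mod_cast lt_of_mul_lt_mul_right this hΔ.le
    obtain hk | hk : k = m + 1 ∨ k = m + 2 := by omega
    · have : (k : ℝ) * Δ = c := by simp [c, hk]
      exact Or.inl ⟨max_le (by linarith) hu0, by linarith⟩
    · have : (k : ℝ) * Δ = c + Δ := by simp [c, hk]; ring
      exact Or.inr ⟨by linarith, huΔ⟩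
  calc _ ≤ volume (Set.Icc (max (c - y) 0) (c - x)) + volume (Set.Icc (c + Δ - y) Δ) :=
        (measure_mono hsub).trans (measure_union_le _ _)
    _ = ENNReal.ofReal (c - x - max (c - y) 0) + ENNReal.ofReal (y - c) := by
        simp only [Real.volume_Icc]; ring_nf
    _ ≤ ENNReal.ofReal (y - x) := by
        rcases le_total c y with hcy | hyc
        · rw [max_eq_right (by linarith), ← ENNReal.ofReal_add (by linarith) (by linarith)]
          exact ENNReal.ofReal_le_ofReal (by linarith)
        · rw [ENNReal.ofReal_of_nonpos (show y - c ≤ 0 by linarith), add_zero]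
          exact ENNReal.ofReal_le_ofReal (by linarith [le_max_left (c - y) 0])

lemma volume_floor_div_ne_le {Δ : ℝ} (hΔ : 0 < Δ) (x y : ℝ) :
    volume {u ∈ Set.Icc 0 Δ | ⌊(x + u) / Δ⌋ ≠ ⌊(y + u) / Δ⌋} ≤ ENNReal.ofReal |x - y| := by
  rcases le_total x y with hxy | hyx
  · simpa [abs_sub_comm x y, abs_of_nonneg (sub_nonneg.2 hxy)]
      using volume_floor_div_ne_le_of_le hΔ hxy
  · simpa [abs_of_nonneg (sub_nonneg.2 hyx), ne_comm]
      using volume_floor_div_ne_le_of_le hΔ hyx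

lemma volume_shiftBox (Δ : ℝ) : volume (shiftBox Δ) = ENNReal.ofReal Δ ^ 2 := by
  simp [shiftBox, Real.volume_Icc_pi, sq]

lemma unifShift_zero : unifShift 0 = 0 := by
  rw [unifShift, Measure.restrict_eq_zero.2 (by simp [volume_shiftBox]), smul_zero]

lemma measurable_gridId (Δ : ℝ) (p : Pt) : Measurable fun b => gridId Δ b p := by
  unfold gridId; fun_prop

lemma measurableSet_gridId_ne (Δ : ℝ) (p q : Pt) :
    MeasurableSet {b | gridId Δ b p ≠ gridId Δ b q} :=
  (measurableSet_eq_fun (measurable_gridId Δ p) (measurable_gridId Δ q)).compl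

lemma volume_gridId_ne_le {Δ : ℝ} (hΔ : 0 < Δ) (p q : Pt) :
    volume ({b | gridId Δ b p ≠ gridId Δ b q} ∩ shiftBox Δ) ≤
      ENNReal.ofReal (2 * Δ * dist p q) := by
  set E : Fin 2 → Set ℝ := fun i => {u ∈ Set.Icc 0 Δ | ⌊(p i + u) / Δ⌋ ≠ ⌊(q i + u) / Δ⌋}
  have hE (i : Fin 2) : volume (E i) ≤ ENNReal.ofReal (dist p q) :=
    (volume_floor_div_ne_le hΔ _ _).trans
      (ENNReal.ofReal_le_ofReal (Real.dist_eq (p i) (q i) ▸ PiLp.dist_apply_le p q i))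
  have hsub : {b | gridId Δ b p ≠ gridId Δ b q} ∩ shiftBox Δ ⊆
      Set.univ.pi ![E 0, Set.Icc 0 Δ] ∪ Set.univ.pi ![Set.Icc 0 Δ, E 1] := by
    rintro b ⟨hne, hb0, hbΔ⟩
    have hb (i : Fin 2) : 0 ≤ b i ∧ b i ≤ Δ := ⟨hb0 i, hbΔ i⟩
    by_cases h0 : ⌊(p 0 + b 0) / Δ⌋ = ⌊(q 0 + b 0) / Δ⌋
    · have h1 : ⌊(p 1 + b 1) / Δ⌋ ≠ ⌊(q 1 + b 1) / Δ⌋ := fun h1 => hne (by simp [gridId, h0, h1])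
      exact Or.inr (by simp [Fin.forall_fin_two, E, hb, h1])
    · exact Or.inl (by simp [Fin.forall_fin_two, E, hb, h0])
  calc _ ≤ volume (Set.univ.pi ![E 0, Set.Icc 0 Δ]) + volume (Set.univ.pi ![Set.Icc 0 Δ, E 1]) :=
        (measure_mono hsub).trans (measure_union_le _ _)
    _ = volume (E 0) * ENNReal.ofReal Δ + ENNReal.ofReal Δ * volume (E 1) := by
        simp [volume_pi_pi, Fin.prod_univ_two, Real.volume_Icc]
    _ ≤ ENNReal.ofReal (dist p q) * ENNReal.ofReal Δ +
          ENNReal.ofReal Δ * ENNReal.ofReal (dist p q) := by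
        gcongr <;> exact hE _
    _ = ENNReal.ofReal (2 * Δ * dist p q) := by
        rw [← ENNReal.ofReal_mul dist_nonneg, ← ENNReal.ofReal_mul hΔ.le,
          ← ENNReal.ofReal_add (by positivity) (by positivity)]
        ring_nf

lemma unifShift_gridId_ne_le {Δ : ℝ} (hΔ : 0 < Δ) (p q : Pt) :
    unifShift Δ {b | gridId Δ b p ≠ gridId Δ b q} ≤ ENNReal.ofReal (2 * dist p q / Δ) := by
  rw [unifShift, Measure.smul_apply, Measure.restrict_apply (measurableSet_gridId_ne Δ p q),
    volume_shiftBox, smul_eq_mul, ← ENNReal.ofReal_pow hΔ.le,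
    ← ENNReal.ofReal_inv_of_pos (by positivity)]
  calc _ ≤ ENNReal.ofReal (Δ ^ 2)⁻¹ * ENNReal.ofReal (2 * Δ * dist p q) :=
        mul_le_mul_right (volume_gridId_ne_le hΔ p q) _
    _ = ENNReal.ofReal (2 * dist p q / Δ) := by
        rw [← ENNReal.ofReal_mul (by positivity)]
        congr 1
        field_simp

namespace MMatch

variable {n m : ℕ}

instance : Finite (MMatch n m) :=
  Finite.of_injective (fun M : MMatch n m => M.pairs) fun M N h => by
    cases M; cases N; simpa using h

lemma card_pairs_le_left (M : MMatch n m) : M.pairs.card ≤ n :=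
  (Finset.card_le_card_of_injOn Prod.fst (fun _ _ => Finset.mem_univ _) M.inj1).trans (by simp)

lemma card_pairs_le_right (M : MMatch n m) : M.pairs.card ≤ m :=
  (Finset.card_le_card_of_injOn Prod.snd (fun _ _ => Finset.mem_univ _) M.inj2).trans (by simp)

def filter (M : MMatch n m) (r : Fin n × Fin m → Prop) [DecidablePred r] : MMatch n m where
  pairs := M.pairs.filter r
  inj1 p hp q hq := M.inj1 p (Finset.mem_of_mem_filter p hp) q (Finset.mem_of_mem_filter q hq)
  inj2 p hp q hq := M.inj2 p (Finset.mem_of_mem_filter p hp) q (Finset.mem_of_mem_filter q hq)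
  mono p hp q hq := M.mono p (Finset.mem_of_mem_filter p hp) q (Finset.mem_of_mem_filter q hq)

lemma gapCount_filter (M : MMatch n m) (r : Fin n × Fin m → Prop) [DecidablePred r] :
    gapCount (M.filter r) = gapCount M + 2 * (M.pairs.filter fun p => ¬ r p).card := by
  have := Finset.card_filter_add_card_filter_not (s := M.pairs) r
  have := M.card_pairs_le_left
  have := M.card_pairs_le_right
  simp only [gapCount, filter]
  omega

end MMatch

lemma exists_cost_eq_GED (n m : ℕ) (P Q : ℕ → Pt) :
    ∃ M : MMatch n m, GED n m P Q = cost n m P Q M := by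
  have hrange : {c | ∃ M : MMatch n m, c = cost n m P Q M} = Set.range (cost n m P Q) := by
    ext c; simp [eq_comm]
  have : Nonempty (MMatch n m) := ⟨⟨∅, by simp, by simp, by simp⟩⟩
  rw [GED, hrange]
  obtain ⟨M, hM⟩ := (Set.range_nonempty (cost n m P Q)).csInf_mem (Set.finite_range _)
  exact ⟨M, hM.symm⟩

def separatedPairs {n m : ℕ} (Δ : ℝ) (P Q : ℕ → Pt) (M : MMatch n m) (b : Fin 2 → ℝ) :
    Finset (Fin n × Fin m) :=
  M.pairs.filter fun p => gridId Δ b (P p.1) ≠ gridId Δ b (Q p.2)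

lemma Xmin_le_gapCount_add {n : ℕ} (Δ : ℝ) (P Q : ℕ → Pt) (M : MMatch n n) (b : Fin 2 → ℝ) :
    Xmin n Δ P Q b ≤ gapCount M + 2 * (separatedPairs Δ P Q M b).card := by
  rw [separatedPairs, ← MMatch.gapCount_filter]
  exact Nat.sInf_le ⟨_, fun _ hp => (Finset.mem_filter (s := M.pairs).1 hp).2, rfl⟩

section separatedPairs

variable {n m : ℕ} (P Q : ℕ → Pt) (M : MMatch n m)

lemma card_separatedPairs_eq_sum_indicator (Δ : ℝ) (b : Fin 2 → ℝ) :
    ((separatedPairs Δ P Q M b).card : ℝ≥0∞) =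
      ∑ p ∈ M.pairs, {b | gridId Δ b (P p.1) ≠ gridId Δ b (Q p.2)}.indicator 1 b := by
  simp [separatedPairs, Finset.card_filter, Set.indicator_apply]

lemma measurable_card_separatedPairs (Δ : ℝ) :
    Measurable fun b => ((separatedPairs Δ P Q M b).card : ℝ≥0∞) := by
  simp_rw [card_separatedPairs_eq_sum_indicator]
  exact Finset.measurable_sum _ fun p _ =>
    measurable_one.indicator (measurableSet_gridId_ne Δ (P p.1) (Q p.2))

lemma lintegral_card_separatedPairs_le {Δ : ℝ} (hΔ : 0 < Δ) :
    ∫⁻ b, (separatedPairs Δ P Q M b).card ∂unifShift Δ ≤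
      ENNReal.ofReal (2 * (∑ p ∈ M.pairs, dist (P p.1) (Q p.2)) / Δ) := by
  calc ∫⁻ b, (separatedPairs Δ P Q M b).card ∂unifShift Δ
      = ∑ p ∈ M.pairs, unifShift Δ {b | gridId Δ b (P p.1) ≠ gridId Δ b (Q p.2)} := by
        simp_rw [card_separatedPairs_eq_sum_indicator]
        rw [lintegral_finsetSum _ fun p _ =>
          measurable_one.indicator (measurableSet_gridId_ne Δ (P p.1) (Q p.2))]
        simp_rw [lintegral_indicator_one (measurableSet_gridId_ne Δ _ _)]
    _ ≤ ∑ p ∈ M.pairs, ENNReal.ofReal (2 * dist (P p.1) (Q p.2) / Δ) :=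
        Finset.sum_le_sum fun p _ => unifShift_gridId_ne_le hΔ _ _
    _ = ENNReal.ofReal (2 * (∑ p ∈ M.pairs, dist (P p.1) (Q p.2)) / Δ) := by
        rw [← ENNReal.ofReal_sum_of_nonneg fun _ _ => by positivity, Finset.mul_sum,
          Finset.sum_div]

end separatedPairs

/-- If `GED(P, Q) ≤ g` and `Δ = g / √n`, then for a uniformly random shift `b ∈ [0, Δ]²`,
the probability that `X b ≥ 12√n + 2g` is at most `1/2`. -/
theorem prob_Xmin_large_le (n : ℕ) (P Q : ℕ → Pt) (g : ℝ) (hg : 0 < g)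
    (hged : GED n n P Q ≤ g) (Δ : ℝ) (hΔ : Δ = g / Real.sqrt n) :
    unifShift Δ {b | 12 * Real.sqrt n + 2 * g ≤ (Xmin n Δ P Q b : ℝ)} ≤ 1 / 2 := by
  rcases Nat.eq_zero_or_pos n with rfl | hn
  · -- `Δ = g / √0 = 0`, so the box of shifts is a single point
    simp [hΔ, unifShift_zero]
  have hsqrt : 0 < Real.sqrt n := Real.sqrt_pos.2 (by exact_mod_cast hn)
  have hΔpos : 0 < Δ := hΔ ▸ div_pos hg hsqrt
  obtain ⟨M, hM⟩ := exists_cost_eq_GED n n P Q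
  have hcost : (∑ p ∈ M.pairs, dist (P p.1) (Q p.2)) + gapCount M ≤ g := by
    simpa [hM, cost] using hged
  have hdist : ∑ p ∈ M.pairs, dist (P p.1) (Q p.2) ≤ g := by
    linarith [(gapCount M).cast_nonneg (α := ℝ)]
  have hgap : (gapCount M : ℝ) ≤ g := by
    have : 0 ≤ ∑ p ∈ M.pairs, dist (P p.1) (Q p.2) := by positivity
    linarith
  have hbad : {b | 12 * Real.sqrt n + 2 * g ≤ (Xmin n Δ P Q b : ℝ)} ⊆
      {b | ENNReal.ofReal (6 * Real.sqrt n) ≤ (separatedPairs Δ P Q M b).card} := by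
    intro b (hb : 12 * Real.sqrt n + 2 * g ≤ (Xmin n Δ P Q b : ℝ))
    have hX : (Xmin n Δ P Q b : ℝ) ≤ gapCount M + 2 * (separatedPairs Δ P Q M b).card := by
      exact_mod_cast Xmin_le_gapCount_add Δ P Q M b
    simpa using ENNReal.ofReal_le_ofReal (show 6 * Real.sqrt n ≤ (separatedPairs Δ P Q M b).card by
      linarith)
  calc _ ≤ unifShift Δ {b | ENNReal.ofReal (6 * Real.sqrt n) ≤ (separatedPairs Δ P Q M b).card} :=
        measure_mono hbad
    _ ≤ (∫⁻ b, (separatedPairs Δ P Q M b).card ∂unifShift Δ) / ENNReal.ofReal (6 * Real.sqrt n) :=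
        meas_ge_le_lintegral_div (measurable_card_separatedPairs P Q M Δ).aemeasurable
          (by positivity) ENNReal.ofReal_ne_top
    _ ≤ ENNReal.ofReal (2 * g / Δ) / ENNReal.ofReal (6 * Real.sqrt n) := by
        gcongr
        exact (lintegral_card_separatedPairs_le P Q M hΔpos).trans
          (ENNReal.ofReal_le_ofReal (by gcongr))
    _ = ENNReal.ofReal (1 / 3) := by
        rw [← ENNReal.ofReal_div_of_pos (by positivity), hΔ]
        congr 1
        field_simp
        ring
    _ ≤ 1 / 2 := ENNReal.ofReal_le_of_le_toReal (by norm_num)
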